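/- arXiv:1808.03901 — 2 statements merged into one kernel-verified Lean document; each statement's English description precedes it below -/
import Mathlib

section
/- For every admissible multi-index k = (k₁,…,k_d) and every q ∈ (0,1), ζ[k : q] ≤ ζ[2 : q]; that is, ζ[2:q] is the maximum element of the set of multiple q-zeta values under the pointwise order. -/
open Finset Filter

/-- The q-integer [m:q] = (1-q^m)/(1-q). -/
noncomputable def qint (q : ℝ) (m : ℕ) : ℝ := (1 - q ^ m) / (1 - q)

/-- Tail of the multiple q-zeta value: sum over m₁ > ⋯ > m_d > n. -/
noncomputable def qZeta {d : ℕ} (q : ℝ) (k : Fin d → ℕ) (n : ℕ) : ℝ :=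
  ∑' m : {m : Fin d → ℕ // StrictAnti m ∧ ∀ i, n < m i},
    ∏ i, q ^ (m.1 i * (k i - 1)) / (qint q (m.1 i)) ^ (k i)

/-- The modified multiple q-zeta value ζ[k₁,…,k_d; r : q). -/
noncomputable def qZetaR {d : ℕ} (q : ℝ) (k : Fin d → ℕ) (r : ℕ) : ℝ :=
  ∑' m : {m : Fin (d + 1) → ℕ // StrictAnti m ∧ ∀ i, 0 < m i},
    (∏ i : Fin d, q ^ (m.1 i.castSucc * (k i - 1)) / (qint q (m.1 i.castSucc)) ^ (k i))
      / (m.1 (Fin.last d) : ℝ) ^ r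

/-- Multiple zeta value. -/
noncomputable def mzv {d : ℕ} (k : Fin d → ℕ) : ℝ :=
  ∑' m : {m : Fin d → ℕ // StrictAnti m ∧ ∀ i, 0 < m i},
    ∏ i, (1 : ℝ) / (m.1 i : ℝ) ^ (k i)

/-- Akhilesh's double tail of a multiple zeta value. -/
noncomputable def dtail {d : ℕ} (hd : 0 < d) (k : Fin d → ℕ) (p n : ℕ) : ℝ :=
  ∑' m : {m : Fin d → ℕ // StrictAnti m ∧ ∀ i, n < m i},
    ((Nat.choose (m.1 ⟨0, hd⟩ + p) p : ℝ))⁻¹ * ∏ i, (1 : ℝ) / (m.1 i : ℝ) ^ (k i)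

/-!
Write `t_k(m) = q^{m(k-1)}/[m]^k`. Since `q^m ≤ [m]`, we have `t_{k+1}(m) ≤ t_k(m)` for
`k ≥ 1`, so `t_k(m) ≤ t_1(m) = 1/[m]`, and `t_k(m) ≤ t_2(m) = q^m/[m]^2` when `k ≥ 2`.
The relation `[m+1] = 1 + q[m]` gives `t_2(m+1) ≤ q^m/[m] - q^{m+1}/[m+1]`, so the tail
`∑_{m>j} t_2(m)` telescopes to at most `q^j/[j]`.

By induction on the depth, summing out the smallest index `m_d = j`: the sum over
`m_1 > ⋯ > m_{d-1} > j` is at most `∑_{m>j} t_2(m) ≤ q^j/[j]`, and `t_{k_d}(j) ≤ 1/[j]`,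
so the `j`-th term is at most `t_2(j)`; summing over `j` gives `ζ[2:q]`. The comparison is
made in `ℝ≥0∞`, so only the summability of `t_2` is needed to return to `ℝ`.
-/

open scoped ENNReal

section QInt

variable {q : ℝ}

lemma qint_nonneg (hq0 : 0 ≤ q) (hq1 : q < 1) (m : ℕ) : 0 ≤ qint q m :=
  div_nonneg (by linarith [pow_le_one₀ hq0 hq1.le (n := m)]) (by linarith)

lemma one_le_qint (hq0 : 0 ≤ q) (hq1 : q < 1) {m : ℕ} (hm : 1 ≤ m) : 1 ≤ qint q m := by
  rw [qint, le_div_iff₀ (by linarith)]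
  linarith [pow_le_pow_of_le_one hq0 hq1.le hm, pow_one q]

lemma pow_le_qint (hq0 : 0 ≤ q) (hq1 : q < 1) {m : ℕ} (hm : 1 ≤ m) : q ^ m ≤ qint q m :=
  (pow_le_one₀ hq0 hq1.le).trans (one_le_qint hq0 hq1 hm)

lemma qint_succ (hq : q ≠ 1) (m : ℕ) : qint q (m + 1) = 1 + q * qint q m := by
  have : 1 - q ≠ 0 := sub_ne_zero.2 hq.symm
  rw [qint, qint]
  field_simp
  ring

end QInt

noncomputable def qTerm (q : ℝ) (k m : ℕ) : ℝ := q ^ (m * (k - 1)) / qint q m ^ k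

lemma qZeta_eq_tsum_qTerm (q : ℝ) {d : ℕ} (k : Fin d → ℕ) (n : ℕ) :
    qZeta q k n = ∑' m : {m : Fin d → ℕ // StrictAnti m ∧ ∀ i, n < m i},
      ∏ i, qTerm q (k i) (m.1 i) :=
  rfl

section QTerm

variable {q : ℝ}

lemma qTerm_nonneg (hq0 : 0 ≤ q) (hq1 : q < 1) (k m : ℕ) : 0 ≤ qTerm q k m :=
  div_nonneg (pow_nonneg hq0 _) (pow_nonneg (qint_nonneg hq0 hq1 m) _)

lemma qTerm_succ {k : ℕ} (hk : 1 ≤ k) (m : ℕ) :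
    qTerm q (k + 1) m = q ^ m / qint q m * qTerm q k m := by
  obtain ⟨j, rfl⟩ := Nat.exists_eq_add_of_le' hk
  simp only [qTerm, Nat.add_sub_cancel, mul_add, mul_one, pow_add, pow_succ]
  ring

lemma qTerm_le_qTerm (hq0 : 0 ≤ q) (hq1 : q < 1) {j k : ℕ} (hj : 1 ≤ j) (hjk : j ≤ k)
    (m : ℕ) : qTerm q k m ≤ qTerm q j m := by
  refine antitoneOn_nat_Ici_of_succ_le (f := fun k => qTerm q k m) (fun k hk => ?_)
    hj (hj.trans hjk) hjk
  rw [qTerm_succ hk]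
  rcases Nat.eq_zero_or_pos m with rfl | hm
  · simp [qTerm, qint]
  refine mul_le_of_le_one_left (qTerm_nonneg hq0 hq1 k m) ?_
  exact (div_le_one (by linarith [one_le_qint hq0 hq1 hm])).2 (pow_le_qint hq0 hq1 hm)

lemma qTerm_two_le_pow (hq0 : 0 ≤ q) (hq1 : q < 1) (m : ℕ) : qTerm q 2 m ≤ q ^ m := by
  rcases Nat.eq_zero_or_pos m with rfl | hm
  · simp [qTerm, qint] -- `qint q 0 = 0` and `x / 0 = 0`
  simpa [qTerm] using div_le_self (pow_nonneg hq0 m) (one_le_pow₀ (one_le_qint hq0 hq1 hm))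

lemma summable_qTerm_two (hq0 : 0 ≤ q) (hq1 : q < 1) : Summable (qTerm q 2) :=
  (summable_geometric_of_lt_one hq0 hq1).of_nonneg_of_le (qTerm_nonneg hq0 hq1 2)
    (qTerm_two_le_pow hq0 hq1)

lemma qTerm_two_succ_le_sub (hq0 : 0 ≤ q) (hq1 : q < 1) {m : ℕ} (hm : 1 ≤ m) :
    qTerm q 2 (m + 1) ≤ q ^ m / qint q m - q ^ (m + 1) / qint q (m + 1) := by
  have h1 := one_le_qint hq0 hq1 hm
  rw [qTerm, qint_succ hq1.ne, div_sub_div _ _ (by positivity) (by positivity),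
    div_le_div_iff₀ (by positivity) (by positivity)]
  simp only [Nat.add_one_sub_one, mul_one, pow_succ]
  nlinarith [pow_nonneg hq0 m, mul_nonneg hq0 (pow_nonneg hq0 m)]

def natGtEquiv (n : ℕ) : ℕ ≃ {x : ℕ // n < x} where
  toFun i := ⟨i + (n + 1), by omega⟩
  invFun x := x.1 - (n + 1)
  left_inv i := Nat.add_sub_cancel i (n + 1)
  right_inv x := Subtype.ext (Nat.sub_add_cancel x.2)

lemma tsum_qTerm_two_gt_le (hq0 : 0 ≤ q) (hq1 : q < 1) {n : ℕ} (hn : 1 ≤ n) :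
    ∑' j : {x : ℕ // n < x}, ENNReal.ofReal (qTerm q 2 j)
      ≤ ENNReal.ofReal (q ^ n / qint q n) := by
  set a : ℕ → ℝ := fun i => q ^ (n + i) / qint q (n + i)
  have ha : ∀ i, 0 ≤ a i := fun i => div_nonneg (pow_nonneg hq0 _) (qint_nonneg hq0 hq1 _)
  have hterm : ∀ i, qTerm q 2 (natGtEquiv n i) ≤ a i - a (i + 1) := fun i => by
    simpa [natGtEquiv, a, add_comm, add_left_comm, add_assoc] using
      qTerm_two_succ_le_sub hq0 hq1 (m := n + i) (by omega)
  rw [← (natGtEquiv n).tsum_eq]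
  refine ENNReal.tsum_le_of_sum_range_le fun N => ?_
  rw [← ENNReal.ofReal_sum_of_nonneg fun i _ => qTerm_nonneg hq0 hq1 _ _]
  refine ENNReal.ofReal_le_ofReal ?_
  calc ∑ i ∈ range N, qTerm q 2 (natGtEquiv n i)
      ≤ ∑ i ∈ range N, (a i - a (i + 1)) := sum_le_sum fun i _ => hterm i
    _ = a 0 - a N := sum_range_sub' a N
    _ ≤ q ^ n / qint q n := by simpa [a] using ha N

end QTerm

section NestedSum

def snocTailEquiv (d n : ℕ) :
    (Σ j : {x : ℕ // n < x}, {s : Fin d → ℕ // StrictAnti s ∧ ∀ i, j.1 < s i})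
      ≃ {m : Fin (d + 1) → ℕ // StrictAnti m ∧ ∀ i, n < m i} where
  toFun p := ⟨Fin.snoc p.2.1 p.1.1, by
    obtain ⟨⟨j, hj⟩, ⟨s, hs, hsj⟩⟩ := p
    refine ⟨fun a b hab => ?_, fun i => ?_⟩
    · induction b using Fin.lastCases with
      | last =>
        obtain ⟨a, rfl⟩ := Fin.exists_castSucc_eq.2 hab.ne
        simpa using hsj a
      | cast b =>
        induction a using Fin.lastCases with
        | last => exact absurd hab (Fin.castSucc_lt_last b).not_gt
        | cast a => simpa using hs (Fin.castSucc_lt_castSucc_iff.1 hab)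
    · induction i using Fin.lastCases with
      | last => simpa using hj
      | cast i => simpa using hj.trans (hsj i)⟩
  invFun m := ⟨⟨m.1 (Fin.last d), m.2.2 _⟩,
    ⟨Fin.init m.1, m.2.1.comp_strictMono Fin.strictMono_castSucc,
      fun i => m.2.1 (Fin.castSucc_lt_last i)⟩⟩
  left_inv p := Sigma.subtype_ext (Subtype.ext (Fin.snoc_last (α := fun _ => ℕ) _ _))
    (Fin.init_snoc (α := fun _ => ℕ) _ _)
  right_inv m := Subtype.ext (Fin.snoc_init_self m.1)

noncomputable def nestedSum {d : ℕ} (w : Fin d → ℕ → ℝ≥0∞) (n : ℕ) : ℝ≥0∞ :=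
  ∑' m : {m : Fin d → ℕ // StrictAnti m ∧ ∀ i, n < m i}, ∏ i, w i (m.1 i)

lemma nestedSum_zero (w : Fin 0 → ℕ → ℝ≥0∞) (n : ℕ) : nestedSum w n = 1 := by
  have : Unique {m : Fin 0 → ℕ // StrictAnti m ∧ ∀ i, n < m i} :=
    { default := ⟨finZeroElim, fun i => i.elim0, fun i => i.elim0⟩
      uniq := fun _ => Subtype.ext (funext finZeroElim) }
  simp [nestedSum]

lemma nestedSum_succ {d : ℕ} (w : Fin (d + 1) → ℕ → ℝ≥0∞) (n : ℕ) :
    nestedSum w n = ∑' j : {x : ℕ // n < x},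
      nestedSum (fun i => w i.castSucc) j * w (Fin.last d) j := by
  rw [nestedSum, ← (snocTailEquiv d n).tsum_eq, ENNReal.tsum_sigma']
  refine tsum_congr fun j => ?_
  rw [nestedSum, ← ENNReal.tsum_mul_right]
  refine tsum_congr fun s => ?_
  simp [snocTailEquiv, Fin.prod_univ_castSucc]

lemma nestedSum_one (w : Fin 1 → ℕ → ℝ≥0∞) (n : ℕ) :
    nestedSum w n = ∑' j : {x : ℕ // n < x}, w 0 j := by
  simp [nestedSum_succ, nestedSum_zero]

end NestedSum

lemma tsum_le_tsum_of_ofReal_le {ι κ : Type*} {f : ι → ℝ} {g : κ → ℝ}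
    (hf : ∀ i, 0 ≤ f i) (hg : ∀ j, 0 ≤ g j) (hgs : Summable g)
    (h : ∑' i, ENNReal.ofReal (f i) ≤ ∑' j, ENNReal.ofReal (g j)) :
    ∑' i, f i ≤ ∑' j, g j := by
  rw [← ENNReal.ofReal_tsum_of_nonneg hg hgs] at h
  calc ∑' i, f i = (∑' i, ENNReal.ofReal (f i)).toReal := by
        rw [ENNReal.tsum_toReal_eq fun _ => ENNReal.ofReal_ne_top]
        exact tsum_congr fun i => (ENNReal.toReal_ofReal (hf i)).symm
    _ ≤ ∑' j, g j := ENNReal.toReal_le_of_le_ofReal (tsum_nonneg hg) h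

section QZeta

variable {q : ℝ}

lemma tsum_ofReal_prod_qTerm (hq0 : 0 ≤ q) (hq1 : q < 1) {d : ℕ} (k : Fin d → ℕ) (n : ℕ) :
    ∑' m : {m : Fin d → ℕ // StrictAnti m ∧ ∀ i, n < m i},
      ENNReal.ofReal (∏ i, qTerm q (k i) (m.1 i))
      = nestedSum (fun i m => ENNReal.ofReal (qTerm q (k i) m)) n :=
  tsum_congr fun _ => ENNReal.ofReal_prod_of_nonneg fun _ _ => qTerm_nonneg hq0 hq1 _ _

lemma summable_prod_qTerm_two (hq0 : 0 ≤ q) (hq1 : q < 1) (n : ℕ) :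
    Summable fun m : {m : Fin 1 → ℕ // StrictAnti m ∧ ∀ i, n < m i} =>
      ∏ i, qTerm q 2 (m.1 i) := by
  have hinj : Function.Injective
      fun m : {m : Fin 1 → ℕ // StrictAnti m ∧ ∀ i, n < m i} => m.1 0 :=
    fun m m' h => Subtype.ext (funext fun i => by rwa [Subsingleton.elim i 0])
  exact ((summable_qTerm_two hq0 hq1).comp_injective hinj).congr
    fun m => (Fin.prod_univ_one fun i => qTerm q 2 (m.1 i)).symm

lemma nestedSum_qTerm_le (hq0 : 0 ≤ q) (hq1 : q < 1) :
    ∀ (d : ℕ) (k : Fin (d + 1) → ℕ), 2 ≤ k 0 → (∀ i, 1 ≤ k i) → ∀ n,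
      nestedSum (fun i m => ENNReal.ofReal (qTerm q (k i) m)) n
        ≤ ∑' j : {x : ℕ // n < x}, ENNReal.ofReal (qTerm q 2 j)
  | 0, k, hk0, _, n => by
    rw [nestedSum_one]
    exact ENNReal.tsum_le_tsum fun j =>
      ENNReal.ofReal_le_ofReal (qTerm_le_qTerm hq0 hq1 one_le_two hk0 j)
  | d + 1, k, hk0, hk, n => by
    rw [nestedSum_succ]
    refine ENNReal.tsum_le_tsum fun j => ?_
    have hj : 1 ≤ j.1 := Nat.one_le_of_lt j.2
    have hinner :=
      (nestedSum_qTerm_le hq0 hq1 d (fun i => k i.castSucc) hk0 (fun i => hk _) j).trans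
        (tsum_qTerm_two_gt_le hq0 hq1 hj)
    have hlast := ENNReal.ofReal_le_ofReal (qTerm_le_qTerm hq0 hq1 le_rfl (hk (Fin.last _)) j)
    calc _ ≤ ENNReal.ofReal (q ^ j.1 / qint q j) * ENNReal.ofReal (qTerm q 1 j) :=
          mul_le_mul' hinner hlast
      _ = ENNReal.ofReal (qTerm q 2 j) := by
          rw [← ENNReal.ofReal_mul (div_nonneg (pow_nonneg hq0 _) (qint_nonneg hq0 hq1 _)),
            ← qTerm_succ le_rfl]

end QZeta

theorem stmt9 (d : ℕ) (hd : 0 < d) (k : Fin d → ℕ) (hk1 : 2 ≤ k ⟨0, hd⟩)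
    (hk : ∀ i, 1 ≤ k i) (q : ℝ) (hq : q ∈ Set.Ioo (0:ℝ) 1) :
    qZeta q k 0 ≤ qZeta q (fun _ : Fin 1 => 2) 0 := by
  obtain ⟨hq0, hq1⟩ := hq
  obtain ⟨d, rfl⟩ := Nat.exists_eq_add_one.2 hd
  have hterm := qTerm_nonneg hq0.le hq1
  rw [qZeta_eq_tsum_qTerm, qZeta_eq_tsum_qTerm]
  refine tsum_le_tsum_of_ofReal_le (fun _ => prod_nonneg fun _ _ => hterm _ _)
    (fun _ => prod_nonneg fun _ _ => hterm _ _) (summable_prod_qTerm_two hq0.le hq1 0) ?_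
  rw [tsum_ofReal_prod_qTerm hq0.le hq1, tsum_ofReal_prod_qTerm hq0.le hq1, nestedSum_one]
  exact nestedSum_qTerm_le hq0.le hq1 d k hk1 hk 0
end

section
/- The function q ↦ ζ[2:q] = Σ_{m>0} q^m/[m:q]² on (0,1) satisfies lim_{q→0⁺} ζ[2:q] = 0 and lim_{q→1⁻} ζ[2:q] = ζ(2) = π²/6; in particular it is bounded on (0,1). -/
open Finset Filter

/-!
For `q ≥ 0`, Cauchy–Schwarz applied to the vectors `(√q ^ j)` and `(√q ^ (m - 1 - j))`, `j < m`,
gives `[m:q]² ≥ m² q^(m-1)`, so the summands `q^m / [m:q]²` are bounded by `1 / m²` uniformly for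
`q ∈ [0,1]`. Written with `[m:q] = 1 + q + ⋯ + q^(m-1)`, each summand is continuous on `[0,1]`,
hence by the Weierstrass M-test so is `ζ[2:q]`; its values at the endpoints are `0` and
`∑ 1/m² = π²/6`, and it is bounded by `π²/6`.
-/

theorem sq_mul_sq_pow_le_geom_sum_sq {R : Type*} [CommRing R] [LinearOrder R]
    [IsStrictOrderedRing R] (t : R) (n : ℕ) :
    ((n : R) + 1) ^ 2 * (t ^ 2) ^ n ≤ (∑ j ∈ range (n + 1), (t ^ 2) ^ j) ^ 2 := by
  have hprod : ∀ j ∈ range (n + 1), t ^ j * t ^ (n - j) = t ^ n := fun j hj => by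
    rw [← pow_add, Nat.add_sub_cancel' (Nat.lt_succ_iff.mp (mem_range.mp hj))]
  have hsq : ∀ j, (t ^ j) ^ 2 = (t ^ 2) ^ j := fun j => pow_right_comm t j 2
  have hreflect : ∑ j ∈ range (n + 1), (t ^ 2) ^ (n - j) = ∑ j ∈ range (n + 1), (t ^ 2) ^ j :=
    sum_range_reflect (fun j => (t ^ 2) ^ j) (n + 1)
  calc ((n : R) + 1) ^ 2 * (t ^ 2) ^ n = (∑ j ∈ range (n + 1), t ^ j * t ^ (n - j)) ^ 2 := by
        rw [sum_congr rfl hprod, sum_const, card_range, nsmul_eq_mul, mul_pow, ← hsq]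
        push_cast; ring
    _ ≤ (∑ j ∈ range (n + 1), (t ^ j) ^ 2) * ∑ j ∈ range (n + 1), (t ^ (n - j)) ^ 2 :=
        sum_mul_sq_le_sq_mul_sq _ _ _
    _ = (∑ j ∈ range (n + 1), (t ^ 2) ^ j) ^ 2 := by
        simp_rw [hsq]
        rw [hreflect, ← sq]

theorem sq_mul_pow_le_geom_sum_sq {q : ℝ} (hq : 0 ≤ q) (n : ℕ) :
    ((n : ℝ) + 1) ^ 2 * q ^ n ≤ (∑ j ∈ range (n + 1), q ^ j) ^ 2 := by
  simpa only [Real.sq_sqrt hq] using sq_mul_sq_pow_le_geom_sum_sq (√q) n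

theorem qint_eq_geom_sum {q : ℝ} (hq : q ≠ 1) (m : ℕ) : qint q m = ∑ j ∈ range m, q ^ j := by
  rw [qint, geom_sum_eq hq, ← neg_div_neg_eq, neg_sub, neg_sub]

def strictAntiFinOneEquiv (n : ℕ) : ℕ ≃ {m : Fin 1 → ℕ // StrictAnti m ∧ ∀ i, n < m i} where
  toFun j := ⟨fun _ => j + n + 1, fun i i' h => absurd (Subsingleton.elim i i') h.ne,
    fun _ => by dsimp only; omega⟩
  invFun m := m.1 0 - (n + 1)
  left_inv j := by simp
  right_inv m := by
    ext i
    rw [Subsingleton.elim i 0]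
    have hm := m.2.2 0
    simp only
    omega

theorem qZeta_fin_one (q : ℝ) (k n : ℕ) :
    qZeta q (fun _ : Fin 1 => k) n =
      ∑' j : ℕ, q ^ ((j + n + 1) * (k - 1)) / qint q (j + n + 1) ^ k := by
  rw [qZeta, ← (strictAntiFinOneEquiv n).tsum_eq]
  simp [strictAntiFinOneEquiv]

/-- The summand `q ^ m / [m:q] ^ 2` of `ζ[2:q]` at `m = n + 1`, with `[m:q]` written as a
geometric sum so that it stays continuous at `q = 1`. -/
noncomputable def qZetaTwoTerm (q : ℝ) (n : ℕ) : ℝ :=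
  q ^ (n + 1) / (∑ j ∈ range (n + 1), q ^ j) ^ 2

theorem qZetaTwoTerm_nonneg {q : ℝ} (hq : 0 ≤ q) (n : ℕ) : 0 ≤ qZetaTwoTerm q n := by
  unfold qZetaTwoTerm; positivity

theorem qZetaTwoTerm_le {q : ℝ} (hq₀ : 0 ≤ q) (hq₁ : q ≤ 1) (n : ℕ) :
    qZetaTwoTerm q n ≤ 1 / ((n : ℝ) + 1) ^ 2 := by
  have hsum := geom_sum_pos hq₀ n.succ_ne_zero
  rw [qZetaTwoTerm, div_le_div_iff₀ (by positivity) (by positivity)]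
  calc q ^ (n + 1) * ((n : ℝ) + 1) ^ 2 = q * (((n : ℝ) + 1) ^ 2 * q ^ n) := by ring
    _ ≤ 1 * (∑ j ∈ range (n + 1), q ^ j) ^ 2 :=
        mul_le_mul hq₁ (sq_mul_pow_le_geom_sum_sq hq₀ n) (by positivity) zero_le_one

theorem continuousOn_qZetaTwoTerm (n : ℕ) : ContinuousOn (qZetaTwoTerm · n) (Set.Ici 0) :=
  (continuousOn_pow _).div (by fun_prop) fun q hq =>
    pow_ne_zero 2 (geom_sum_pos (Set.mem_Ici.mp hq) n.succ_ne_zero).ne'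

theorem qZeta_two_eq_tsum_qZetaTwoTerm {q : ℝ} (hq : q ≠ 1) :
    qZeta q (fun _ : Fin 1 => 2) 0 = ∑' n, qZetaTwoTerm q n := by
  simp [qZeta_fin_one, qZetaTwoTerm, qint_eq_geom_sum hq]

theorem hasSum_one_div_nat_add_one_sq :
    HasSum (fun n : ℕ => 1 / ((n : ℝ) + 1) ^ 2) (Real.pi ^ 2 / 6) := by
  simpa using (hasSum_nat_add_iff' 1).mpr hasSum_zeta_two

theorem continuousOn_tsum_qZetaTwoTerm :
    ContinuousOn (fun q => ∑' n, qZetaTwoTerm q n) (Set.Icc 0 1) :=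
  continuousOn_tsum (fun n => (continuousOn_qZetaTwoTerm n).mono fun _ hq => hq.1)
    hasSum_one_div_nat_add_one_sq.summable fun n q hq => by
      rw [Real.norm_of_nonneg (qZetaTwoTerm_nonneg hq.1 n)]
      exact qZetaTwoTerm_le hq.1 hq.2 n

theorem tendsto_qZeta_two {a : ℝ} (ha : a ∈ Set.Icc 0 1) :
    Tendsto (fun q : ℝ => qZeta q (fun _ : Fin 1 => 2) 0) (nhdsWithin a (Set.Ioo 0 1))
      (nhds (∑' n, qZetaTwoTerm a n)) :=
  ((continuousOn_tsum_qZetaTwoTerm a ha).mono Set.Ioo_subset_Icc_self).tendsto.congr'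
    (eventuallyEq_nhdsWithin_of_eqOn fun _ hq => (qZeta_two_eq_tsum_qZetaTwoTerm hq.2.ne).symm)

theorem abs_qZeta_two_le {q : ℝ} (hq : q ∈ Set.Ioo 0 1) :
    |qZeta q (fun _ : Fin 1 => 2) 0| ≤ Real.pi ^ 2 / 6 := by
  rw [qZeta_two_eq_tsum_qZetaTwoTerm hq.2.ne,
    abs_of_nonneg (tsum_nonneg (qZetaTwoTerm_nonneg hq.1.le)),
    ← hasSum_one_div_nat_add_one_sq.tsum_eq]
  have hle := qZetaTwoTerm_le hq.1.le hq.2.le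
  have hsum := hasSum_one_div_nat_add_one_sq.summable
  exact (hsum.of_nonneg_of_le (qZetaTwoTerm_nonneg hq.1.le) hle).tsum_le_tsum hle hsum

theorem stmt11 :
    Tendsto (fun q : ℝ => qZeta q (fun _ : Fin 1 => 2) 0)
        (nhdsWithin 0 (Set.Ioo (0:ℝ) 1)) (nhds 0) ∧
    Tendsto (fun q : ℝ => qZeta q (fun _ : Fin 1 => 2) 0)
        (nhdsWithin 1 (Set.Ioo (0:ℝ) 1)) (nhds (Real.pi ^ 2 / 6)) ∧
    ∃ C : ℝ, ∀ q ∈ Set.Ioo (0:ℝ) 1, |qZeta q (fun _ : Fin 1 => 2) 0| ≤ C := by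
  refine ⟨?_, ?_, ⟨_, fun q hq => abs_qZeta_two_le hq⟩⟩
  · simpa [qZetaTwoTerm] using tendsto_qZeta_two (a := 0) (by simp)
  · simpa [qZetaTwoTerm, ← hasSum_one_div_nat_add_one_sq.tsum_eq]
      using tendsto_qZeta_two (a := 1) (by simp)
end
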